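/- (Theorem 3.1) Let x_i, y ∈ ℝⁿ, let z, ẑ : {1,...,n} → {1,...,K} be labelings, and let β̂^sub and β̂ be the OLS-type estimators β̂^sub = Σ_k (x_{i,k} − μ̂_i(ẑ_k))(y_k − ĝ(ẑ_k)) / Σ_k (x_{i,k} − μ̂_i(ẑ_k))², where μ̂_i(z), ĝ(z) are group means within groups of ẑ, and β̂ defined analogously with the labeling z and its group means. Let α = n_min/n, δ = (1/n)·#{k : ẑ_k ≠ z_k}, and ρ = min{Σ_k (x_{i,k}−μ̄_i(z_k))², Σ_k (x_{i,k}−μ̂_i(ẑ_k))²}/‖x_i‖₂². If α > 0 and ρ > 0 then |β̂^sub − β̂| ≤ (2√2/ρ²)·√(δ/α)·‖y‖₂/‖x_i‖₂. -/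

import Mathlib

/-- Number of indices with label `v`. -/
def labelCount {n K : ℕ} (w : Fin n → Fin K) (v : Fin K) : ℕ :=
  (Finset.univ.filter (fun k => w k = v)).card

/-- Group mean of the values `x k` over the group `{k : w k = v}`. -/
noncomputable def groupMean {n K : ℕ} (x : Fin n → ℝ) (w : Fin n → Fin K) (v : Fin K) : ℝ :=
  (∑ k ∈ Finset.univ.filter (fun k => w k = v), x k) / (labelCount w v : ℝ)

/-- The OLS-type estimator of the regression coefficient of `y` on `x`,
adjusting for the groups defined by the labeling `w`. -/
noncomputable def olsEstimator {n K : ℕ} (x y : Fin n → ℝ) (w : Fin n → Fin K) : ℝ :=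
  (∑ k : Fin n, (x k - groupMean x w (w k)) * (y k - groupMean y w (w k))) /
    (∑ k : Fin n, (x k - groupMean x w (w k)) ^ 2)

/-!
Both estimators are Frisch–Waugh–Lovell coefficients `⟪x, Q y⟫ / ‖Q x‖²`, where `Q = 1 - P` and
`P` is the orthogonal projection onto the vectors constant on the groups of the labeling. A vector
constant on the groups of `ẑ` agrees with the `z`-constant vector carrying the same group values
outside the `δ n` mislabeled indices, and every group has at least `α n` members; hence it lies
within `√(2δ/α)` times its norm of the `z`-constant space, and symmetrically. Splitting a vector
along `P_ẑ` and using `‖P_z P_ẑᗮ‖ = ‖P_ẑᗮ P_z‖`, this gives `‖P_ẑ - P_z‖ ≤ √(2δ/α)`. The numerators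
and denominators of the two estimators then differ by at most `‖P_ẑ - P_z‖ ‖x‖ ‖y‖` and
`‖P_ẑ - P_z‖ ‖x‖²`, while both denominators are at least `ρ ‖x‖²`.
-/

open Submodule Finset
open scoped InnerProductSpace

namespace AdjustedRegression

theorem abs_div_sub_div_le {a b c d : ℝ} (hb : 0 < b) (hd : 0 < d) :
    |a / b - c / d| ≤ (|a - c| * d + |c| * |d - b|) / (b * d) := by
  rw [div_sub_div _ _ hb.ne' hd.ne', abs_div, abs_of_pos (mul_pos hb hd)]
  gcongr
  calc |a * d - b * c| = |(a - c) * d + c * (d - b)| := by ring_nf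
    _ ≤ |a - c| * d + |c| * |d - b| :=
      (abs_add_le _ _).trans_eq (by rw [abs_mul, abs_mul, abs_of_pos hd])

theorem sum_sq_comp_sub_comp_le {ι κ : Type*} [Fintype ι] [Fintype κ] [DecidableEq κ]
    (h : κ → ℝ) (z zh : ι → κ) :
    ∑ k, (h (zh k) - h (z k)) ^ 2 ≤ 2 * #{k | zh k ≠ z k} * ∑ v, h v ^ 2 := by
  have hterm : ∀ k ∈ univ.filter (fun k => zh k ≠ z k),
      (h (zh k) - h (z k)) ^ 2 ≤ 2 * ∑ v, h v ^ 2 := by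
    intro k hk
    have hpair : h (zh k) ^ 2 + h (z k) ^ 2 ≤ ∑ v, h v ^ 2 := by
      rw [← sum_pair (f := (h · ^ 2)) (mem_filter.mp hk).2]
      exact sum_le_sum_of_subset_of_nonneg (subset_univ _) fun _ _ _ => sq_nonneg _
    nlinarith [sq_nonneg (h (zh k) + h (z k))]
  rw [← sum_filter_of_ne (p := fun k => zh k ≠ z k) fun k _ hne heq => hne (by simp [heq])]
  calc _ ≤ #{k | zh k ≠ z k} • (2 * ∑ v, h v ^ 2) := sum_le_card_nsmul _ _ _ hterm
    _ = _ := by rw [nsmul_eq_mul]; ring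

section InnerProductSpace

variable {E : Type*} [NormedAddCommGroup E] [InnerProductSpace ℝ E]

theorem norm_sub_starProjection_le_of_mem (U : Submodule ℝ E) [U.HasOrthogonalProjection]
    (y : E) {u : E} (hu : u ∈ U) : ‖y - U.starProjection y‖ ≤ ‖y - u‖ := by
  rw [starProjection_minimal]
  exact ciInf_le ⟨0, by rintro _ ⟨v, rfl⟩; positivity⟩ (⟨u, hu⟩ : U)

theorem norm_starProjection_le_of_forall_mem {V W : Submodule ℝ E} [V.HasOrthogonalProjection]
    [W.HasOrthogonalProjection] {s : ℝ} (hs : 0 ≤ s)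
    (hVW : ∀ v ∈ V, ‖W.starProjection v‖ ≤ s * ‖v‖) {w : E} (hw : w ∈ W) :
    ‖V.starProjection w‖ ≤ s * ‖w‖ := by
  set p := V.starProjection w
  -- the adjoint of `P_V P_W` is `P_W P_V`
  have key : ‖p‖ ^ 2 ≤ s * ‖w‖ * ‖p‖ := calc
    ‖p‖ ^ 2 = ⟪p, p⟫_ℝ := (real_inner_self_eq_norm_sq p).symm
    _ = ⟪w, V.starProjection p⟫_ℝ := inner_starProjection_left_eq_right V w p
    _ = ⟪W.starProjection w, p⟫_ℝ := by
      rw [starProjection_eq_self_iff.mpr (starProjection_apply_mem V w),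
        starProjection_eq_self_iff.mpr hw]
    _ = ⟪w, W.starProjection p⟫_ℝ := inner_starProjection_left_eq_right W w p
    _ ≤ ‖w‖ * ‖W.starProjection p‖ := real_inner_le_norm _ _
    _ ≤ ‖w‖ * (s * ‖p‖) := by gcongr; exact hVW p (starProjection_apply_mem V w)
    _ = s * ‖w‖ * ‖p‖ := by ring
  rcases (norm_nonneg p).eq_or_lt with hp | hp
  · rw [← hp]; positivity
  · nlinarith

theorem norm_starProjection_sub_starProjection_le {U V : Submodule ℝ E}
    [U.HasOrthogonalProjection] [V.HasOrthogonalProjection] {s : ℝ} (hs : 0 ≤ s)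
    (hUV : ∀ u ∈ U, ‖Vᗮ.starProjection u‖ ≤ s * ‖u‖)
    (hVU : ∀ v ∈ V, ‖Uᗮ.starProjection v‖ ≤ s * ‖v‖) (x : E) :
    ‖U.starProjection x - V.starProjection x‖ ≤ s * ‖x‖ := by
  set a := U.starProjection x
  set b := Uᗮ.starProjection x
  have hab : a + b = x := starProjection_add_starProjection_orthogonal x
  have hsplit : a - V.starProjection x = Vᗮ.starProjection a - V.starProjection b := by
    rw [← hab, map_add, starProjection_orthogonal_val]; abel
  have ha : ‖Vᗮ.starProjection a‖ ≤ s * ‖a‖ := hUV a (starProjection_apply_mem U x)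
  have hb : ‖V.starProjection b‖ ≤ s * ‖b‖ :=
    norm_starProjection_le_of_forall_mem hs hVU (starProjection_apply_mem Uᗮ x)
  have horth : ⟪Vᗮ.starProjection a, V.starProjection b⟫_ℝ = 0 :=
    inner_left_of_mem_orthogonal (starProjection_apply_mem V b) (starProjection_apply_mem Vᗮ a)
  refine le_of_sq_le_sq ?_ (by positivity)
  calc ‖a - V.starProjection x‖ ^ 2
      = ‖Vᗮ.starProjection a‖ ^ 2 + ‖V.starProjection b‖ ^ 2 := by
        rw [hsplit, sq, sq, sq, norm_sub_sq_eq_norm_sq_add_norm_sq_real horth]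
    _ ≤ (s * ‖a‖) ^ 2 + (s * ‖b‖) ^ 2 := by gcongr
    _ = (s * ‖x‖) ^ 2 := by
        rw [mul_pow, mul_pow, mul_pow, ← mul_add, norm_sq_eq_add_norm_sq_starProjection x U]

theorem inner_starProjection_starProjection (U : Submodule ℝ E) [U.HasOrthogonalProjection]
    (x y : E) : ⟪U.starProjection x, U.starProjection y⟫_ℝ = ⟪x, U.starProjection y⟫_ℝ := by
  rw [inner_starProjection_left_eq_right,
    starProjection_eq_self_iff.mpr (starProjection_apply_mem U y)]

/-- Frisch–Waugh–Lovell form of the coefficient of `x` in the least-squares regression of `y`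
on `x` and `U`. -/
noncomputable def adjustedRegCoeff (U : Submodule ℝ E) [U.HasOrthogonalProjection] (x y : E) :
    ℝ :=
  ⟪Uᗮ.starProjection x, Uᗮ.starProjection y⟫_ℝ / ‖Uᗮ.starProjection x‖ ^ 2

theorem abs_adjustedRegCoeff_sub_le {U V : Submodule ℝ E} [U.HasOrthogonalProjection]
    [V.HasOrthogonalProjection] {x : E} (hx : x ≠ 0) (y : E) {s ρ : ℝ} (hρ : 0 < ρ)
    (hdiff : ∀ v, ‖U.starProjection v - V.starProjection v‖ ≤ s * ‖v‖)
    (hU : ρ * ‖x‖ ^ 2 ≤ ‖Uᗮ.starProjection x‖ ^ 2)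
    (hV : ρ * ‖x‖ ^ 2 ≤ ‖Vᗮ.starProjection x‖ ^ 2) :
    |adjustedRegCoeff U x y - adjustedRegCoeff V x y| ≤ 2 * s / ρ ^ 2 * ‖y‖ / ‖x‖ := by
  have hr : 0 < ‖x‖ := norm_pos_iff.mpr hx
  have hs : 0 ≤ s := nonneg_of_mul_nonneg_left ((norm_nonneg _).trans (hdiff x)) hr
  have hρr : 0 < ρ * ‖x‖ ^ 2 := by positivity
  have hcoeff (W : Submodule ℝ E) [W.HasOrthogonalProjection] : adjustedRegCoeff W x y =
      ⟪x, Wᗮ.starProjection y⟫_ℝ / ‖Wᗮ.starProjection x‖ ^ 2 := by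
    rw [adjustedRegCoeff, inner_starProjection_starProjection]
  have hnorm (W : Submodule ℝ E) [W.HasOrthogonalProjection] :
      ‖Wᗮ.starProjection x‖ ^ 2 = ⟪x, Wᗮ.starProjection x⟫_ℝ := by
    rw [← inner_starProjection_starProjection, real_inner_self_eq_norm_sq]
  have hresid (v : E) : Uᗮ.starProjection v - Vᗮ.starProjection v =
      V.starProjection v - U.starProjection v := by
    simp only [starProjection_orthogonal_val]; abel
  have hnum : |⟪x, Uᗮ.starProjection y⟫_ℝ - ⟪x, Vᗮ.starProjection y⟫_ℝ| ≤ s * ‖x‖ * ‖y‖ := calc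
    _ = |⟪x, V.starProjection y - U.starProjection y⟫_ℝ| := by rw [← inner_sub_right, hresid]
    _ ≤ ‖x‖ * ‖V.starProjection y - U.starProjection y‖ := abs_real_inner_le_norm _ _
    _ ≤ ‖x‖ * (s * ‖y‖) := by gcongr; rw [norm_sub_rev]; exact hdiff y
    _ = s * ‖x‖ * ‖y‖ := by ring
  have hden : |‖Vᗮ.starProjection x‖ ^ 2 - ‖Uᗮ.starProjection x‖ ^ 2| ≤ s * ‖x‖ ^ 2 := calc
    _ = |⟪x, V.starProjection x - U.starProjection x⟫_ℝ| := by
      rw [hnorm, hnorm, ← inner_sub_right, ← neg_sub, hresid, inner_neg_right, abs_neg]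
    _ ≤ ‖x‖ * ‖V.starProjection x - U.starProjection x‖ := abs_real_inner_le_norm _ _
    _ ≤ ‖x‖ * (s * ‖x‖) := by gcongr; rw [norm_sub_rev]; exact hdiff x
    _ = s * ‖x‖ ^ 2 := by ring
  have hVy : |⟪x, Vᗮ.starProjection y⟫_ℝ| ≤ ‖x‖ * ‖y‖ :=
    (abs_real_inner_le_norm _ _).trans (by gcongr; exact norm_starProjection_apply_le _ _)
  have hVx : ‖Vᗮ.starProjection x‖ ^ 2 ≤ ‖x‖ ^ 2 := by
    gcongr; exact norm_starProjection_apply_le _ _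
  rw [hcoeff, hcoeff]
  calc _ ≤ _ := abs_div_sub_div_le (hρr.trans_le hU) (hρr.trans_le hV)
    _ ≤ (s * ‖x‖ * ‖y‖ * ‖x‖ ^ 2 + ‖x‖ * ‖y‖ * (s * ‖x‖ ^ 2)) /
        ((ρ * ‖x‖ ^ 2) * (ρ * ‖x‖ ^ 2)) := by
      gcongr
    _ = 2 * s / ρ ^ 2 * ‖y‖ / ‖x‖ := by field_simp; ring

end InnerProductSpace

section Labeling

variable {n K : ℕ}

/-- The column span of the dummy encoding of `w`; its orthogonal projection is the `P` of the
paper. -/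
def groupConstant (w : Fin n → Fin K) : Submodule ℝ (EuclideanSpace ℝ (Fin n)) :=
  LinearMap.range ((WithLp.linearEquiv 2 ℝ (Fin n → ℝ)).symm.toLinearMap ∘ₗ
    LinearMap.funLeft ℝ ℝ w)

theorem mem_groupConstant {w : Fin n → Fin K} {v : EuclideanSpace ℝ (Fin n)} :
    v ∈ groupConstant w ↔ ∃ h : Fin K → ℝ, WithLp.toLp 2 (h ∘ w) = v :=
  LinearMap.mem_range

theorem labelCount_mul_groupMean (x : Fin n → ℝ) (w : Fin n → Fin K) (v : Fin K) :
    labelCount w v * groupMean x w v = ∑ k ∈ univ.filter (w · = v), x k := by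
  rcases eq_or_ne (labelCount w v) 0 with h | h
  · simp [groupMean, h, card_eq_zero.mp h]
  · exact mul_div_cancel₀ _ (Nat.cast_ne_zero.mpr h)

theorem sum_comp_eq_sum_labelCount_mul (w : Fin n → Fin K) (f : Fin K → ℝ) :
    ∑ k, f (w k) = ∑ v, labelCount w v * f v := by
  rw [← sum_fiberwise univ w]
  refine sum_congr rfl fun v _ => ?_
  rw [sum_congr rfl fun k hk => congrArg f (mem_filter.mp hk).2, sum_const, nsmul_eq_mul,
    labelCount]

theorem sum_sub_groupMean_mul (x : Fin n → ℝ) (w : Fin n → Fin K) (h : Fin K → ℝ) :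
    ∑ k, (x k - groupMean x w (w k)) * h (w k) = 0 := by
  rw [← sum_fiberwise univ w]
  refine sum_eq_zero fun v _ => ?_
  rw [sum_congr rfl fun k hk => by rw [(mem_filter.mp hk).2], ← sum_mul, sum_sub_distrib,
    sum_const, nsmul_eq_mul, ← labelCount, labelCount_mul_groupMean, sub_self, zero_mul]

theorem starProjection_groupConstant (w : Fin n → Fin K) (x : Fin n → ℝ) :
    (groupConstant w).starProjection (WithLp.toLp 2 x) =
      WithLp.toLp 2 (fun k => groupMean x w (w k)) := by
  refine eq_starProjection_of_mem_of_inner_eq_zero (mem_groupConstant.mpr ⟨groupMean x w, rfl⟩) ?_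
  rintro _ ⟨h, rfl⟩
  simpa [PiLp.inner_apply, mul_comm] using sum_sub_groupMean_mul x w h

theorem norm_sq_starProjection_orthogonal_groupConstant (w : Fin n → Fin K) (x : Fin n → ℝ) :
    ‖(groupConstant w)ᗮ.starProjection (WithLp.toLp 2 x)‖ ^ 2 =
      ∑ k, (x k - groupMean x w (w k)) ^ 2 := by
  rw [starProjection_orthogonal_val, starProjection_groupConstant, ← WithLp.toLp_sub,
    EuclideanSpace.real_norm_sq_eq]
  rfl

theorem olsEstimator_eq_adjustedRegCoeff (x y : Fin n → ℝ) (w : Fin n → Fin K) :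
    olsEstimator x y w =
      adjustedRegCoeff (groupConstant w) (WithLp.toLp 2 x) (WithLp.toLp 2 y) := by
  simp [adjustedRegCoeff, olsEstimator, starProjection_groupConstant,
    EuclideanSpace.real_norm_sq_eq, PiLp.inner_apply, mul_comm]

theorem mul_sum_sq_le_sum_sq_comp {w : Fin n → Fin K} {nm : ℕ}
    (hcount : ∀ v, nm ≤ labelCount w v) (h : Fin K → ℝ) :
    nm * ∑ v, h v ^ 2 ≤ ∑ k, h (w k) ^ 2 := by
  rw [sum_comp_eq_sum_labelCount_mul w (h · ^ 2), mul_sum]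
  gcongr with v
  exact_mod_cast hcount v

theorem norm_starProjection_orthogonal_groupConstant_le {z zh : Fin n → Fin K} {nm : ℕ}
    (hnm : 0 < nm) (hcount : ∀ v, nm ≤ labelCount zh v) {u : EuclideanSpace ℝ (Fin n)}
    (hu : u ∈ groupConstant zh) :
    ‖(groupConstant z)ᗮ.starProjection u‖ ≤ √(2 * #{k | zh k ≠ z k} / nm) * ‖u‖ := by
  obtain ⟨h, rfl⟩ := mem_groupConstant.mp hu
  have hnm' : (0 : ℝ) < nm := Nat.cast_pos.mpr hnm
  -- compare with the `z`-constant vector taking the same group values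
  have hdist := norm_sub_starProjection_le_of_mem (groupConstant z) (WithLp.toLp 2 (h ∘ zh))
    (mem_groupConstant.mpr ⟨h, rfl⟩)
  rw [← Real.sqrt_sq (norm_nonneg (WithLp.toLp 2 (h ∘ zh))), ← Real.sqrt_mul' _ (sq_nonneg _),
    starProjection_orthogonal_val]
  refine Real.le_sqrt_of_sq_le ((pow_le_pow_left₀ (norm_nonneg _) hdist 2).trans ?_)
  simp only [EuclideanSpace.real_norm_sq_eq, PiLp.sub_apply, Function.comp_apply]
  calc _ ≤ 2 * #{k | zh k ≠ z k} * ∑ v, h v ^ 2 := sum_sq_comp_sub_comp_le h z zh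
    _ = 2 * #{k | zh k ≠ z k} / nm * (nm * ∑ v, h v ^ 2) := by field_simp
    _ ≤ _ := by gcongr; exact mul_sum_sq_le_sum_sq_comp hcount h

end Labeling

end AdjustedRegression

open AdjustedRegression in
theorem substitute_adjustment_error_bound {n K : ℕ} (x y : Fin n → ℝ)
    (z zh : Fin n → Fin K)
    (nmin : ℕ)
    (hnmin : nmin = sInf (Set.range fun v => min (labelCount z v) (labelCount zh v)))
    (α δ ρ : ℝ)
    (hα : α = (nmin : ℝ) / n)
    (hδ : δ = ((Finset.univ.filter (fun k => zh k ≠ z k)).card : ℝ) / n)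
    (hρ : ρ = min (∑ k : Fin n, (x k - groupMean x z (z k)) ^ 2)
        (∑ k : Fin n, (x k - groupMean x zh (zh k)) ^ 2) / (∑ k : Fin n, (x k) ^ 2))
    (hαpos : 0 < α) (hρpos : 0 < ρ) :
    |olsEstimator x y zh - olsEstimator x y z| ≤
      (2 * Real.sqrt 2 / ρ ^ 2) * Real.sqrt (δ / α) *
        Real.sqrt (∑ k : Fin n, (y k) ^ 2) / Real.sqrt (∑ k : Fin n, (x k) ^ 2) := by
  have hn : (n : ℝ) ≠ 0 := fun h => by simp [hα, h] at hαpos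
  have hnmin_pos : 0 < nmin := Nat.pos_of_ne_zero fun h => by simp [hα, h] at hαpos
  have hcount (v : Fin K) : nmin ≤ labelCount z v ∧ nmin ≤ labelCount zh v :=
    le_min_iff.mp (hnmin ▸ Nat.sInf_le ⟨v, rfl⟩)
  have hnorm (v : Fin n → ℝ) : ‖WithLp.toLp 2 v‖ ^ 2 = ∑ k, v k ^ 2 :=
    EuclideanSpace.real_norm_sq_eq _
  have hx : WithLp.toLp 2 x ≠ 0 := fun h => by simp [hρ, ← hnorm, h] at hρpos
  have hmin : ρ * ‖WithLp.toLp 2 x‖ ^ 2 = min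
      (‖(groupConstant z)ᗮ.starProjection (WithLp.toLp 2 x)‖ ^ 2)
      (‖(groupConstant zh)ᗮ.starProjection (WithLp.toLp 2 x)‖ ^ 2) := by
    rw [hρ, norm_sq_starProjection_orthogonal_groupConstant,
      norm_sq_starProjection_orthogonal_groupConstant, hnorm, div_mul_cancel₀]
    simpa [← hnorm] using hx
  have hswap : #{k | z k ≠ zh k} = #{k | zh k ≠ z k} := by simp_rw [ne_comm]
  have hscale : √(2 * #{k | zh k ≠ z k} / nmin) = √2 * √(δ / α) := by
    rw [hδ, hα, ← Real.sqrt_mul zero_le_two]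
    congr 1
    field_simp
  have hdiff := norm_starProjection_sub_starProjection_le (Real.sqrt_nonneg _)
    (fun u hu => norm_starProjection_orthogonal_groupConstant_le hnmin_pos (hcount · |>.2) hu)
    (fun v hv => hswap ▸ norm_starProjection_orthogonal_groupConstant_le hnmin_pos
      (hcount · |>.1) hv)
  have hbound := abs_adjustedRegCoeff_sub_le hx (WithLp.toLp 2 y) hρpos hdiff
    (hmin ▸ min_le_right _ _) (hmin ▸ min_le_left _ _)
  rw [olsEstimator_eq_adjustedRegCoeff, olsEstimator_eq_adjustedRegCoeff]
  convert hbound using 1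
  rw [hscale, ← hnorm, ← hnorm, Real.sqrt_sq (norm_nonneg _), Real.sqrt_sq (norm_nonneg _)]
  ring
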